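/- Suppose f is analytic on a neighborhood of the closed Bernstein ellipse E_χ (foci ±1, sum of half-axes χ > 1), real valued on the reals, with M(χ) = sup_{z ∈ E_χ} |f(z)|. Then for every k, the best uniform polynomial approximation error on [-1,1] satisfies E_k(f) ≤ 2 M(χ) / (χ^k (χ - 1)). -/

import Mathlib

/-!
The Joukowski map `J w = (w + w⁻¹) / 2` sends the closed annulus `1 ≤ ‖w‖ ≤ χ` into `E_χ`, and
`J (exp (θ * I)) = cos θ`. Hence `G = f ∘ J` is holomorphic on the annulus and satisfies
`G w⁻¹ = G w`, so the Fourier coefficients `c n` of `θ ↦ G (exp (θ * I))` are even in `n`;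
shifting the Cauchy integral for `c n` to the circle `‖w‖ = χ` gives `‖c n‖ ≤ M χ^(-|n|)`.
Summing the Fourier series in pairs `±n` gives the Chebyshev expansion
`f (cos θ) = c 0 + ∑_{n ≥ 1} 2 c n T_n (cos θ)`, whose tail after `T_k` is at most
`∑_{n > k} 2 M χ^(-n) = 2 M / (χ^k (χ - 1))`.
-/

open Complex Set

/-- The closed Bernstein ellipse with foci `±1` and sum of half-axes `χ`:
half-axes `a = (χ²+1)/(2χ)` and `b = (χ²-1)/(2χ)`. -/
def bernsteinEllipse (χ : ℝ) : Set ℂ :=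
  {z : ℂ | z.re ^ 2 / ((χ ^ 2 + 1) / (2 * χ)) ^ 2 +
      z.im ^ 2 / ((χ ^ 2 - 1) / (2 * χ)) ^ 2 ≤ 1}

open Real Metric

noncomputable def joukowski (w : ℂ) : ℂ := (w + w⁻¹) / 2

theorem joukowski_inv (w : ℂ) : joukowski w⁻¹ = joukowski w := by
  rw [joukowski, joukowski, inv_inv, add_comm]

theorem joukowski_exp_mul_I (θ : ℝ) : joukowski (Complex.exp (θ * I)) = Real.cos θ := by
  rw [joukowski, ← Complex.exp_neg, Complex.ofReal_cos, Complex.cos, neg_mul]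

theorem differentiableAt_joukowski {w : ℂ} (hw : w ≠ 0) : DifferentiableAt ℂ joukowski w :=
  (differentiableAt_id.add (differentiableAt_inv hw)).div_const 2

theorem re_joukowski (w : ℂ) : (joukowski w).re = w.re / ‖w‖ * ((‖w‖ + ‖w‖⁻¹) / 2) := by
  rcases eq_or_ne w 0 with rfl | hw
  · simp [joukowski]
  have hr : ‖w‖ ≠ 0 := norm_ne_zero_iff.mpr hw
  simp only [joukowski, Complex.div_ofNat_re, Complex.add_re, Complex.inv_re,
    Complex.normSq_eq_norm_sq]
  field_simp

theorem im_joukowski (w : ℂ) : (joukowski w).im = w.im / ‖w‖ * ((‖w‖ - ‖w‖⁻¹) / 2) := by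
  rcases eq_or_ne w 0 with rfl | hw
  · simp [joukowski]
  have hr : ‖w‖ ≠ 0 := norm_ne_zero_iff.mpr hw
  simp only [joukowski, Complex.div_ofNat_im, Complex.add_im, Complex.inv_im,
    Complex.normSq_eq_norm_sq]
  field_simp
  ring

theorem add_inv_le_add_inv {r s : ℝ} (hr : 1 ≤ r) (hrs : r ≤ s) : r + r⁻¹ ≤ s + s⁻¹ := by
  have hs : 0 < s := by linarith
  have key : 0 ≤ (s - r) * (r * s - 1) := mul_nonneg (by linarith) (by nlinarith)
  have : s + s⁻¹ - (r + r⁻¹) = (s - r) * (r * s - 1) / (r * s) := by field_simp; ring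
  linarith [div_nonneg key (by positivity : (0:ℝ) ≤ r * s)]

theorem sub_inv_le_sub_inv {r s : ℝ} (hr : 0 < r) (hrs : r ≤ s) : r - r⁻¹ ≤ s - s⁻¹ := by
  have := inv_anti₀ hr hrs
  linarith

theorem mapsTo_joukowski_bernsteinEllipse {χ : ℝ} (hχ : 1 < χ) :
    MapsTo joukowski (closedBall 0 χ \ ball 0 1) (bernsteinEllipse χ) := by
  rintro w ⟨h2, h1⟩
  rw [mem_closedBall_zero_iff] at h2
  rw [mem_ball_zero_iff, not_lt] at h1
  have hχ0 : 0 < χ := by linarith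
  have hunit : (w.re / ‖w‖) ^ 2 + (w.im / ‖w‖) ^ 2 = 1 := by
    have hw : ‖w‖ ^ 2 ≠ 0 := by positivity
    rw [div_pow, div_pow, ← add_div, div_eq_one_iff_eq hw, Complex.sq_norm,
      Complex.normSq_apply]
    ring
  show (joukowski w).re ^ 2 / ((χ ^ 2 + 1) / (2 * χ)) ^ 2
    + (joukowski w).im ^ 2 / ((χ ^ 2 - 1) / (2 * χ)) ^ 2 ≤ 1
  rw [re_joukowski, im_joukowski]
  set r := ‖w‖
  have hr : 0 < r := by linarith
  set a := (χ ^ 2 + 1) / (2 * χ) with ha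
  set b := (χ ^ 2 - 1) / (2 * χ) with hb
  have ha' : a = (χ + χ⁻¹) / 2 := by rw [ha]; field_simp
  have hb' : b = (χ - χ⁻¹) / 2 := by rw [hb]; field_simp
  have ha0 : 0 < a := by rw [ha']; positivity
  have hb0 : 0 < b := by linarith [inv_lt_one_of_one_lt₀ hχ]
  clear_value r a b
  have hα : (r + r⁻¹) / 2 / a ≤ 1 :=
    div_le_one_of_le₀ (by linarith [add_inv_le_add_inv h1 h2]) ha0.le
  have hβ : (r - r⁻¹) / 2 / b ≤ 1 :=
    div_le_one_of_le₀ (by linarith [sub_inv_le_sub_inv hr h2]) hb0.le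
  have hβ0 : 0 ≤ (r - r⁻¹) / 2 / b :=
    div_nonneg (by linarith [inv_le_one_of_one_le₀ h1]) hb0.le
  calc (w.re / r * ((r + r⁻¹) / 2)) ^ 2 / a ^ 2 + (w.im / r * ((r - r⁻¹) / 2)) ^ 2 / b ^ 2
      = (w.re / r) ^ 2 * ((r + r⁻¹) / 2 / a) ^ 2
        + (w.im / r) ^ 2 * ((r - r⁻¹) / 2 / b) ^ 2 := by ring
    _ ≤ (w.re / r) ^ 2 * 1 ^ 2 + (w.im / r) ^ 2 * 1 ^ 2 := by gcongr
    _ = 1 := by rw [one_pow, mul_one, mul_one, hunit]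

theorem bernsteinEllipse_subset_closedBall {χ : ℝ} (hχ : 1 < χ) :
    bernsteinEllipse χ ⊆ closedBall 0 ((χ ^ 2 + 1) / (2 * χ)) := by
  intro z hz
  have hχ0 : 0 < χ := by linarith
  set a := (χ ^ 2 + 1) / (2 * χ)
  set b := (χ ^ 2 - 1) / (2 * χ)
  have ha : 0 < a := by positivity
  have hb : 0 < b := div_pos (by nlinarith) (by positivity)
  have hba : b ≤ a := div_le_div_of_nonneg_right (by linarith) (by positivity)
  have hz' : ‖z‖ ^ 2 / a ^ 2 ≤ 1 := by
    calc ‖z‖ ^ 2 / a ^ 2 = z.re ^ 2 / a ^ 2 + z.im ^ 2 / a ^ 2 := by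
          rw [Complex.sq_norm, Complex.normSq_apply]; ring
      _ ≤ z.re ^ 2 / a ^ 2 + z.im ^ 2 / b ^ 2 := by gcongr
      _ ≤ 1 := hz
  rw [mem_closedBall_zero_iff]
  rw [div_le_one (by positivity)] at hz'
  exact pow_le_pow_iff_left₀ (norm_nonneg z) ha.le two_ne_zero |>.mp hz'

theorem isCompact_bernsteinEllipse {χ : ℝ} (hχ : 1 < χ) : IsCompact (bernsteinEllipse χ) := by
  refine isCompact_of_isClosed_isBounded ?_
    (isBounded_closedBall.subset (bernsteinEllipse_subset_closedBall hχ))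
  exact isClosed_le (by fun_prop) continuous_const

instance fact_zero_lt_two_pi : Fact (0 < 2 * π) := ⟨two_pi_pos⟩

section CircleFourier

variable {E : Type*} [NormedAddCommGroup E] [NormedSpace ℂ E]

theorem fourierCoeff_comp_neg {T : ℝ} [Fact (0 < T)] (f : AddCircle T → E) (n : ℤ) :
    fourierCoeff (fun x => f (-x)) n = fourierCoeff f (-n) := by
  simp only [fourierCoeff]
  rw [← MeasureTheory.integral_neg_eq_self]
  simp only [neg_neg, fourier_apply, smul_neg, neg_smul]

theorem coe_toCircle_two_pi (t : ℝ) :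
    (AddCircle.toCircle (t : AddCircle (2 * π)) : ℂ) = circleMap 0 1 t := by
  rw [AddCircle.toCircle_apply_mk, div_self two_pi_pos.ne', one_mul, Circle.coe_exp,
    circleMap_zero, ofReal_one, one_mul]

theorem fourier_coe_two_pi (n : ℤ) (t : ℝ) :
    fourier n (t : AddCircle (2 * π)) = circleMap 0 1 t ^ n := by
  rw [fourier_apply, AddCircle.toCircle_zsmul, Circle.coe_zpow, coe_toCircle_two_pi]

theorem fourierCoeff_toCircle_eq_circleIntegral (G : ℂ → E) (n : ℤ) :
    fourierCoeff (fun θ : AddCircle (2 * π) => G θ.toCircle) n =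
      (2 * π * I)⁻¹ • ∮ z in C(0, 1), z ^ (-n - 1) • G z := by
  have hint : (∮ z in C(0, 1), z ^ (-n - 1) • G z) = I • ∫ t in (0 : ℝ)..2 * π,
      fourier (-n) (t : AddCircle (2 * π)) • G (AddCircle.toCircle (t : AddCircle (2 * π))) := by
    rw [circleIntegral, ← intervalIntegral.integral_smul]
    refine intervalIntegral.integral_congr fun t _ => ?_
    have hw : circleMap 0 1 t ≠ 0 := circleMap_ne_center one_ne_zero
    simp only [deriv_circleMap, fourier_coe_two_pi, coe_toCircle_two_pi, smul_smul]
    congr 1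
    rw [zpow_sub_one₀ hw]
    field_simp
  rw [hint, fourierCoeff_eq_intervalIntegral _ n 0, zero_add, smul_smul, ← Complex.coe_smul]
  congr 1
  push_cast
  field_simp

theorem norm_circleIntegral_zpow_smul_le_of_differentiableOn_annulus {G : ℂ → E} {r R M : ℝ}
    (hr : 0 < r) (hrR : r ≤ R) (hG : DifferentiableOn ℂ G (closedBall 0 R \ ball 0 r))
    (hM : ∀ z ∈ sphere (0 : ℂ) R, ‖G z‖ ≤ M) (n : ℤ) :
    ‖(2 * π * I)⁻¹ • ∮ z in C(0, r), z ^ (-n - 1) • G z‖ ≤ R ^ (-n) * M := by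
  have hR : 0 < R := hr.trans_le hrR
  have hF : DifferentiableOn ℂ (fun z => z ^ (-n - 1) • G z) (closedBall 0 R \ ball 0 r) := by
    refine DifferentiableOn.smul (fun z hz => ?_) hG
    have hz0 : z ≠ 0 := by rintro rfl; exact hz.2 (mem_ball_self hr)
    exact (differentiableAt_zpow.mpr (Or.inl hz0)).differentiableWithinAt
  have hF_open : ∀ z ∈ (ball (0 : ℂ) R \ closedBall 0 r) \ ∅,
      DifferentiableAt ℂ (fun z => z ^ (-n - 1) • G z) z := fun z hz =>
    hF.differentiableAt <| mem_nhds_iff.mpr ⟨_, sdiff_subset_sdiff ball_subset_closedBall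
      ball_subset_closedBall, isOpen_ball.sdiff isClosed_closedBall, hz.1⟩
  rw [← circleIntegral_eq_of_differentiable_on_annulus_off_countable hr hrR countable_empty
    hF.continuousOn hF_open]
  calc _ ≤ R * (R ^ (-n - 1) * M) := by
        refine circleIntegral.norm_two_pi_i_inv_smul_integral_le_of_norm_le_const hR.le
          fun z hz => ?_
        rw [norm_smul, norm_zpow, mem_sphere_zero_iff_norm.mp hz]
        gcongr
        exact hM z hz
    _ = R ^ (-n) * M := by rw [← mul_assoc, ← zpow_one_add₀ hR.ne']; ring_nf

theorem norm_fourierCoeff_toCircle_le {G : ℂ → E} {R M : ℝ} (hR : 1 ≤ R)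
    (hG : DifferentiableOn ℂ G (closedBall 0 R \ ball 0 1))
    (hM : ∀ z ∈ sphere (0 : ℂ) R, ‖G z‖ ≤ M) (n : ℤ) :
    ‖fourierCoeff (fun θ : AddCircle (2 * π) => G θ.toCircle) n‖ ≤ R ^ (-n) * M := by
  rw [fourierCoeff_toCircle_eq_circleIntegral]
  exact norm_circleIntegral_zpow_smul_le_of_differentiableOn_annulus one_pos hR hG hM n

theorem fourierCoeff_toCircle_neg_of_comp_inv {G : ℂ → E} (hG : ∀ w, G w⁻¹ = G w) (n : ℤ) :
    fourierCoeff (fun θ : AddCircle (2 * π) => G θ.toCircle) (-n) =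
      fourierCoeff (fun θ : AddCircle (2 * π) => G θ.toCircle) n := by
  rw [← fourierCoeff_comp_neg]
  simp only [AddCircle.toCircle_neg, Circle.coe_inv, hG]

theorem norm_fourierCoeff_toCircle_le_of_comp_inv {G : ℂ → E} {R M : ℝ} (hR : 1 ≤ R)
    (hG : DifferentiableOn ℂ G (closedBall 0 R \ ball 0 1))
    (hM : ∀ z ∈ sphere (0 : ℂ) R, ‖G z‖ ≤ M) (hinv : ∀ w, G w⁻¹ = G w) (n : ℤ) :
    ‖fourierCoeff (fun θ : AddCircle (2 * π) => G θ.toCircle) n‖ ≤ M * R⁻¹ ^ n.natAbs := by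
  have hnat (m : ℕ) :
      ‖fourierCoeff (fun θ : AddCircle (2 * π) => G θ.toCircle) m‖ ≤ M * R⁻¹ ^ m := by
    rw [mul_comm M, inv_pow, ← zpow_natCast, ← zpow_neg]
    exact norm_fourierCoeff_toCircle_le hR hG hM m
  obtain ⟨m, rfl | rfl⟩ := Int.eq_nat_or_neg n
  · exact hnat m
  · rw [fourierCoeff_toCircle_neg_of_comp_inv hinv, Int.natAbs_neg, Int.natAbs_natCast]
    exact hnat m

theorem hasSum_two_mul_fourierCoeff_mul_cos {Φ : C(AddCircle (2 * π), ℂ)}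
    (hsum : Summable (fourierCoeff Φ)) (heven : ∀ n, fourierCoeff Φ (-n) = fourierCoeff Φ n)
    (θ : ℝ) :
    HasSum (fun n : ℕ => 2 * fourierCoeff Φ n * Complex.cos (n * θ)) (Φ θ + fourierCoeff Φ 0) := by
  convert (has_pointwise_sum_fourier_series_of_summable hsum (θ : AddCircle (2 * π))).nat_add_neg
    using 1
  · ext n
    rw [heven, smul_eq_mul, smul_eq_mul, ← mul_add, fourier_coe_two_pi, fourier_coe_two_pi,
      circleMap_zero, ofReal_one, one_mul, ← exp_int_mul, ← exp_int_mul, mul_assoc,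
      mul_left_comm, two_cos]
    push_cast
    ring_nf
  · simp

end CircleFourier

theorem summable_pow_natAbs {r : ℝ} (h0 : 0 ≤ r) (h1 : r < 1) :
    Summable fun n : ℤ => r ^ n.natAbs :=
  .of_nat_of_neg (by simpa using summable_geometric_of_lt_one h0 h1)
    (by simpa using summable_geometric_of_lt_one h0 h1)

theorem exists_chebyshev_expansion {χ M : ℝ} {f : ℂ → ℂ} (hχ : 1 < χ)
    (hf : DifferentiableOn ℂ f (bernsteinEllipse χ)) (hM : ∀ z ∈ bernsteinEllipse χ, ‖f z‖ ≤ M) :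
    ∃ c : ℕ → ℂ, (∀ n, ‖c n‖ ≤ M * χ⁻¹ ^ n) ∧ ∀ θ : ℝ,
      HasSum (fun n : ℕ => 2 * c n * Real.cos (n * θ)) (f (Real.cos θ) + c 0) := by
  set G := f ∘ joukowski
  have hG : DifferentiableOn ℂ G (closedBall 0 χ \ ball 0 1) := by
    refine hf.comp (fun w hw => ?_) (mapsTo_joukowski_bernsteinEllipse hχ)
    have hw0 : w ≠ 0 := by rintro rfl; exact hw.2 (mem_ball_self one_pos)
    exact (differentiableAt_joukowski hw0).differentiableWithinAt
  have hsphere {R : ℝ} (h1R : 1 ≤ R) (hRχ : R ≤ χ) :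
      sphere (0 : ℂ) R ⊆ closedBall 0 χ \ ball 0 1 := fun z hz => by
    rw [mem_sphere_zero_iff_norm] at hz
    exact ⟨mem_closedBall_zero_iff.mpr (hz.trans_le hRχ), by rw [mem_ball_zero_iff]; linarith⟩
  have hGM : ∀ z ∈ sphere (0 : ℂ) χ, ‖G z‖ ≤ M := fun z hz =>
    hM _ (mapsTo_joukowski_bernsteinEllipse hχ (hsphere hχ.le le_rfl hz))
  have hGinv (w : ℂ) : G w⁻¹ = G w := congrArg f (joukowski_inv w)
  let Φ : C(AddCircle (2 * π), ℂ) := ⟨fun θ => G θ.toCircle,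
    hG.continuousOn.comp_continuous (by fun_prop) fun θ =>
      hsphere le_rfl hχ.le (mem_sphere_zero_iff_norm.mpr (Circle.norm_coe _))⟩
  have hbound := norm_fourierCoeff_toCircle_le_of_comp_inv hχ.le hG hGM hGinv
  have hsum : Summable (fourierCoeff Φ) := .of_norm_bounded
    ((summable_pow_natAbs (by positivity) (inv_lt_one_of_one_lt₀ hχ)).mul_left M) hbound
  refine ⟨fun n => fourierCoeff Φ n, fun n => hbound n, fun θ => ?_⟩
  convert hasSum_two_mul_fourierCoeff_mul_cos hsum (fourierCoeff_toCircle_neg_of_comp_inv hGinv) θ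
    using 2
  · push_cast
    rfl
  · change f _ = f (joukowski (AddCircle.toCircle (θ : AddCircle (2 * π))))
    rw [coe_toCircle_two_pi, circleMap_zero, ofReal_one, one_mul, joukowski_exp_mul_I]
  · rfl

section Chebyshev

open Polynomial Polynomial.Chebyshev

theorem degree_sum_smul_T_le (a : ℕ → ℝ) (k : ℕ) :
    (∑ n ∈ Finset.range (k + 1), a n • T ℝ n).degree ≤ k := by
  refine (degree_sum_le _ _).trans (Finset.sup_le fun n hn => ?_)
  calc (a n • T ℝ n).degree ≤ (T ℝ n).degree := degree_smul_le _ _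
    _ ≤ k := by
      rw [degree_T, Int.natAbs_natCast, Nat.cast_le]
      exact Nat.lt_succ_iff.mp (Finset.mem_range.mp hn)

theorem exists_degree_le_abs_sub_eval_le_of_hasSum_mul_cos {g : ℝ → ℝ} {a : ℕ → ℝ} {B r : ℝ}
    (hr : r < 1) (ha : ∀ n, |a n| ≤ B * r ^ n)
    (hg : ∀ θ, HasSum (fun n : ℕ => a n * Real.cos (n * θ)) (g (Real.cos θ) + a 0 / 2)) (k : ℕ) :
    ∃ p : ℝ[X], p.degree ≤ k ∧
      ∀ x ∈ Icc (-1 : ℝ) 1, |g x - p.eval x| ≤ B * r ^ (k + 1) / (1 - r) := by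
  refine ⟨∑ n ∈ Finset.range (k + 1), a n • T ℝ n - C (a 0 / 2),
    (degree_sub_le _ _).trans (max_le (degree_sum_smul_T_le a k)
      (degree_C_le.trans (WithBot.coe_le_coe.mpr k.zero_le))), fun x hx => ?_⟩
  obtain ⟨θ, rfl⟩ : ∃ θ, Real.cos θ = x := ⟨arccos x, cos_arccos hx.1 hx.2⟩
  have hterm (n : ℕ) : ‖a n * Real.cos (n * θ)‖ ≤ B * r ^ n := by
    rw [norm_mul, Real.norm_eq_abs, Real.norm_eq_abs]
    exact (mul_le_of_le_one_right (abs_nonneg _) (abs_cos_le_one _)).trans (ha n)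
  have htail := norm_sub_le_of_geometric_bound_of_hasSum hr hterm (hg θ) (k + 1)
  rw [Real.norm_eq_abs, abs_sub_comm] at htail
  convert htail using 2
  simp only [eval_sub, eval_C, eval_finsetSum, eval_smul, T_real_cos, smul_eq_mul, Int.cast_natCast]
  ring

end Chebyshev

theorem bernstein_theorem_general
    (χ : ℝ) (hχ : 1 < χ) (f : ℂ → ℂ)
    (hf : ∃ U : Set ℂ, IsOpen U ∧ bernsteinEllipse χ ⊆ U ∧ AnalyticOn ℂ f U)
    (Mχ : ℝ) (hM : Mχ = sSup ((fun z => ‖f z‖) '' bernsteinEllipse χ))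
    (k : ℕ) :
    ∃ p : Polynomial ℝ, p.degree ≤ k ∧
      ∀ x ∈ Icc (-1 : ℝ) 1, |(f x).re - p.eval x| ≤ 2 * Mχ / (χ ^ k * (χ - 1)) := by
  obtain ⟨U, -, hEU, hfU⟩ := hf
  have hfE : DifferentiableOn ℂ f (bernsteinEllipse χ) := hfU.differentiableOn.mono hEU
  have hfM : ∀ z ∈ bernsteinEllipse χ, ‖f z‖ ≤ Mχ := fun z hz => hM ▸ le_csSup
    ((isCompact_bernsteinEllipse hχ).bddAbove_image hfE.continuousOn.norm) (mem_image_of_mem _ hz)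
  obtain ⟨c, hc, hsum⟩ := exists_chebyshev_expansion hχ hfE hfM
  have ha (n : ℕ) : |2 * (c n).re| ≤ 2 * Mχ * χ⁻¹ ^ n := by
    rw [abs_mul, abs_two, mul_assoc]
    exact mul_le_mul_of_nonneg_left ((abs_re_le_norm _).trans (hc n)) two_pos.le
  have hre (θ : ℝ) : HasSum (fun n : ℕ => 2 * (c n).re * Real.cos (n * θ))
      ((f (Real.cos θ)).re + 2 * (c 0).re / 2) := by
    rw [mul_div_cancel_left₀ _ two_ne_zero]
    simpa only [add_re, re_mul_ofReal, mul_re, re_ofNat, im_ofNat, zero_mul, sub_zero,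
        ofReal_re, ofReal_im, mul_zero] using hasSum_re (hsum θ)
  obtain ⟨p, hp, hpx⟩ := exists_degree_le_abs_sub_eval_le_of_hasSum_mul_cos
    (g := fun x => (f x).re) (inv_lt_one_of_one_lt₀ hχ) ha hre k
  refine ⟨p, hp, fun x hx => (hpx x hx).trans_eq ?_⟩
  have hχ1 : χ - 1 ≠ 0 := by linarith
  rw [inv_pow]
  field_simp
  ring

/-- **Bernstein's theorem.** If `f` is analytic on a neighborhood of the closed Bernstein
ellipse `E_χ` (`χ > 1`), real valued on the reals, and `M(χ) = sup_{z ∈ E_χ} |f z|`, then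
for every `k` there is a real polynomial `p` of degree at most `k` with
`max_{x ∈ [-1,1]} |f(x) - p(x)| ≤ 2 M(χ) / (χ^k (χ - 1))`; in particular the best
approximation error `E_k(f)` satisfies this bound. -/
theorem bernstein_theorem
    (χ : ℝ) (hχ : 1 < χ) (f : ℂ → ℂ)
    (hf : ∃ U : Set ℂ, IsOpen U ∧ bernsteinEllipse χ ⊆ U ∧ AnalyticOn ℂ f U)
    (hreal : ∀ x : ℝ, (f x).im = 0)
    (Mχ : ℝ) (hM : Mχ = sSup ((fun z => ‖f z‖) '' bernsteinEllipse χ))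
    (k : ℕ) :
    ∃ p : Polynomial ℝ, p.degree ≤ k ∧
      ∀ x ∈ Icc (-1 : ℝ) 1, |(f x).re - p.eval x| ≤ 2 * Mχ / (χ ^ k * (χ - 1)) :=
  bernstein_theorem_general χ hχ f hf Mχ hM k
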